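/- arXiv:2510.15071 — 2 statements merged into one kernel-verified Lean document; each statement's English description precedes it below -/
import Mathlib

section
/- Fix r₃₁, r₃₂ ∈ ℝ with r₃₁² + r₃₂² ≤ 1 and r₃₁² < 1, arising as entries (3,1) and (3,2) of a rotation matrix R ∈ SO(3). Define s₁ = −r₃₂/√(1−r₃₁²), c₁ = √(1−s₁²), s₂ = r₃₁, c₂ = √(1−s₂²), and set q₁ = atan2(s₁,c₁), q₂ = atan2(s₂,c₂). Then the vector v = Rₓ(q₁)·R_y(q₂)·e₃ satisfies v = (s₂, −s₁c₂, c₁c₂), and v equals the transpose of the third row of R whenever the third row of R is (r₃₁, r₃₂, r₃₃) with r₃₃ = c₁c₂ ≥ 0. -/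
open Real Matrix

/-- Elementary rotation about the x-axis. -/
noncomputable def Rx (q : ℝ) : Matrix (Fin 3) (Fin 3) ℝ :=
  !![1, 0, 0; 0, Real.cos q, -Real.sin q; 0, Real.sin q, Real.cos q]

/-- Elementary rotation about the y-axis. -/
noncomputable def Ry (q : ℝ) : Matrix (Fin 3) (Fin 3) ℝ :=
  !![Real.cos q, 0, Real.sin q; 0, 1, 0; -Real.sin q, 0, Real.cos q]

/-- `atan2 y x`: the angle whose sine/cosine are proportional to `y`, `x`. -/
noncomputable def atan2 (y x : ℝ) : ℝ := Complex.arg ⟨x, y⟩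

lemma cos_sin_atan2 (s c : ℝ) (hs : s ^ 2 ≤ 1) (hc : c = Real.sqrt (1 - s ^ 2)) :
    Real.cos (atan2 s c) = c ∧ Real.sin (atan2 s c) = s := by
  have habs : ‖(⟨c, s⟩ : ℂ)‖ = 1 := by
    rw [Complex.norm_def, Complex.normSq_mk, hc]
    rw [show √(1 - s ^ 2) * √(1 - s ^ 2) = 1 - s ^ 2 from Real.mul_self_sqrt (by linarith)]
    rw [show 1 - s ^ 2 + s * s = 1 by ring]
    exact Real.sqrt_one
  have hz : (⟨c, s⟩ : ℂ) ≠ 0 := by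
    intro h
    rw [h] at habs
    simp at habs
  constructor
  · rw [atan2, Complex.cos_arg hz, habs]; simp
  · rw [atan2, Complex.sin_arg, habs]; simp

/-- closed-form joint equilibrium solution making the propeller
vertical, given entries `r₃₁, r₃₂` of the third row of the base rotation `R`. -/
theorem joint_equilibrium_closed_form
    (r31 r32 r33 : ℝ) (hle : r31 ^ 2 + r32 ^ 2 ≤ 1) (hlt : r31 ^ 2 < 1)
    (R : Matrix (Fin 3) (Fin 3) ℝ)
    (hR : R.transpose * R = 1) (hdet : R.det = 1)
    (hrow : R 2 0 = r31 ∧ R 2 1 = r32 ∧ R 2 2 = r33)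
    (s1 c1 s2 c2 : ℝ)
    (hs1 : s1 = -r32 / Real.sqrt (1 - r31 ^ 2))
    (hc1 : c1 = Real.sqrt (1 - s1 ^ 2))
    (hs2 : s2 = r31)
    (hc2 : c2 = Real.sqrt (1 - s2 ^ 2))
    (hr33 : r33 = c1 * c2) :
    (Rx (atan2 s1 c1) * Ry (atan2 s2 c2)) *ᵥ ![0, 0, 1] = ![s2, -(s1 * c2), c1 * c2]
      ∧ ![s2, -(s1 * c2), c1 * c2] = (fun i => R 2 i) := by
  have hpos : (0:ℝ) < 1 - r31 ^ 2 := by linarith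
  have hsq : Real.sqrt (1 - r31 ^ 2) ^ 2 = 1 - r31 ^ 2 := Real.sq_sqrt hpos.le
  have hsqrtpos : 0 < Real.sqrt (1 - r31 ^ 2) := Real.sqrt_pos.mpr hpos
  have hs1sq : s1 ^ 2 ≤ 1 := by
    rw [hs1, div_pow, neg_pow]
    rw [hsq]
    rw [div_le_one hpos]
    simpa using by linarith
  have hs2sq : s2 ^ 2 ≤ 1 := by rw [hs2]; linarith
  obtain ⟨hcq1, hsq1⟩ := cos_sin_atan2 s1 c1 hs1sq hc1
  obtain ⟨hcq2, hsq2⟩ := cos_sin_atan2 s2 c2 hs2sq hc2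
  constructor
  · funext i
    fin_cases i <;>
      simp [Rx, Ry, Matrix.mulVec, Matrix.mul_apply, Fin.sum_univ_three, hcq1, hsq1, hcq2, hsq2,
        dotProduct] <;> ring
  · obtain ⟨h0, h1, h2⟩ := hrow
    have hc2v : c2 = Real.sqrt (1 - r31 ^ 2) := by rw [hc2, hs2]
    have : -(s1 * c2) = r32 := by
      rw [hs1, hc2v]
      field_simp
    funext i
    fin_cases i <;> simp [hs2, h0, h1, h2, hr33, this]
end

section
/- With the notation of the previous statement, define ζ_e = −K_p · vee(P((C_e⁻¹)ᵀ E Cᵀ)) where P is the trace-orthogonal projection onto se(3), vee: se(3) → ℝ⁶ the inverse of [·], and K_p a positive-definite diagonal 6×6 matrix. Then along Ċ = [ζ_e]C, the Lyapunov function V = (1/2)‖E‖_F² satisfies V̇ = −vee(P((C_e⁻¹)ᵀ E Cᵀ))ᵀ · L · K_p · vee(P((C_e⁻¹)ᵀ E Cᵀ)) ≤ 0, where L = diag(2,2,2,1,1,1); in particular V̇ < 0 whenever P((C_e⁻¹)ᵀ E Cᵀ) ≠ 0. -/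
/-! With `M = C_e⁻¹` the error has derivative `Ė = M [ζ] C`, so
`V̇ = ⟨E, M [ζ] C⟩_F = ⟨Mᵀ E Cᵀ, [ζ]⟩_F`. Pairing a matrix `A` with a twist matrix `[ζ]` only
sees its projection `P A` onto `se(3)` and equals `ζ ⬝ L vee(P A)`: each angular component occurs
twice in the skew block, hence `L = diag(2,2,2,1,1,1)`. The feedback `ζ = -K_p vee(P A)` then gives
`V̇ = -vᵀ (L K_p) v` with `L K_p` positive diagonal, and `v = vee(P A)` vanishes only when `P A`
does, since `[vee(P A)] = P A`. -/

open Matrix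

/-- The skew-symmetric matrix of `ω ∈ ℝ³`. -/
def skew3 (ω : Fin 3 → ℝ) : Matrix (Fin 3) (Fin 3) ℝ :=
  !![0, -ω 2, ω 1; ω 2, 0, -ω 0; -ω 1, ω 0, 0]

/-- The 4×4 matrix `[ζ]` of a twist `ζ ∈ ℝ⁶` (angular part first). -/
def hat6 (ζ : Fin 6 → ℝ) : Matrix (Fin 3 ⊕ Fin 1) (Fin 3 ⊕ Fin 1) ℝ :=
  Matrix.fromBlocks (skew3 ![ζ 0, ζ 1, ζ 2]) (Matrix.of fun i _ => ![ζ 3, ζ 4, ζ 5] i) 0 0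

/-- The trace-orthogonal projection of a 4×4 matrix onto `se(3)`. -/
noncomputable def Pse3 (A : Matrix (Fin 3 ⊕ Fin 1) (Fin 3 ⊕ Fin 1) ℝ) :
    Matrix (Fin 3 ⊕ Fin 1) (Fin 3 ⊕ Fin 1) ℝ :=
  Matrix.fromBlocks ((1 / 2 : ℝ) • (A.toBlocks₁₁ - A.toBlocks₁₁.transpose))
    A.toBlocks₁₂ 0 0

/-- The `vee` map extracting the 6-vector of an `se(3)`-form matrix. -/
def vee6 (A : Matrix (Fin 3 ⊕ Fin 1) (Fin 3 ⊕ Fin 1) ℝ) : Fin 6 → ℝ :=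
  ![A (Sum.inl 2) (Sum.inl 1), A (Sum.inl 0) (Sum.inl 2), A (Sum.inl 1) (Sum.inl 0),
    A (Sum.inl 0) (Sum.inr 0), A (Sum.inl 1) (Sum.inr 0), A (Sum.inl 2) (Sum.inr 0)]

section Frobenius

variable {m n k l R : Type*} [Fintype m] [Fintype n] [Fintype k] [Fintype l] [CommSemiring R]

theorem Matrix.sum_sum_mul_eq_trace_transpose_mul (A B : Matrix m n R) :
    ∑ i, ∑ j, A i j * B i j = trace (Aᵀ * B) := by
  simp only [trace, diag_apply, mul_apply, transpose_apply]
  exact Finset.sum_comm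

theorem Matrix.sum_sum_mul_mul_mul (E : Matrix m n R) (M : Matrix m k R) (X : Matrix k l R)
    (C : Matrix l n R) :
    ∑ i, ∑ j, E i j * (M * X * C) i j = ∑ i, ∑ j, (Mᵀ * E * Cᵀ) i j * X i j := by
  simp only [sum_sum_mul_eq_trace_transpose_mul, transpose_mul, transpose_transpose,
    Matrix.mul_assoc]
  rw [trace_mul_comm C]
  simp only [Matrix.mul_assoc]

end Frobenius

theorem HasDerivAt.half_sum_sum_sq {m n : Type*} [Fintype m] [Fintype n] {t : ℝ}
    {E : ℝ → Matrix m n ℝ} {E' : Matrix m n ℝ}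
    (h : ∀ i j, HasDerivAt (fun s => E s i j) (E' i j) t) :
    HasDerivAt (fun s => (1 / 2 : ℝ) * ∑ i, ∑ j, E s i j ^ 2) (∑ i, ∑ j, E t i j * E' i j) t := by
  refine (HasDerivAt.const_mul (1 / 2 : ℝ) <| HasDerivAt.fun_sum fun i _ =>
    HasDerivAt.fun_sum fun j _ => (h i j).fun_pow 2).congr_deriv ?_
  simp only [Finset.mul_sum]
  refine Finset.sum_congr rfl fun i _ => Finset.sum_congr rfl fun j _ => ?_
  push_cast
  ring

theorem hasDerivAt_matrix_mul_sub_apply {m n k : Type*} [Fintype k] {t : ℝ}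
    {C : ℝ → Matrix k n ℝ} {C' : Matrix k n ℝ}
    (h : ∀ i j, HasDerivAt (fun s => C s i j) (C' i j) t) (A : Matrix m k ℝ) (B : Matrix m n ℝ)
    (i : m) (j : n) : HasDerivAt (fun s => (A * C s - B) i j) ((A * C') i j) t := by
  simp only [Matrix.sub_apply, mul_apply]
  exact (HasDerivAt.fun_sum fun p _ => (h p j).const_mul (A i p)).sub_const _

theorem Matrix.diagonal_mulVec_dotProduct_diagonal_mulVec {n R : Type*} [Fintype n]
    [DecidableEq n] [CommSemiring R] (d e v : n → R) :
    (diagonal d *ᵥ v) ⬝ᵥ (diagonal e *ᵥ v) = v ⬝ᵥ ((diagonal e * diagonal d) *ᵥ v) := by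
  simp only [dotProduct, mulVec_diagonal, diagonal_mul_diagonal]
  exact Finset.sum_congr rfl fun i _ => by ring

theorem sum_sum_mul_hat6 (A : Matrix (Fin 3 ⊕ Fin 1) (Fin 3 ⊕ Fin 1) ℝ) (ζ : Fin 6 → ℝ) :
    ∑ i, ∑ j, A i j * hat6 ζ i j = ζ ⬝ᵥ (diagonal ![2, 2, 2, 1, 1, 1] *ᵥ vee6 (Pse3 A)) := by
  simp [Fintype.sum_sum_type, Fin.sum_univ_succ, dotProduct, mulVec_diagonal, hat6, skew3, Pse3,
    vee6, toBlocks₁₁, toBlocks₁₂]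
  ring

theorem hat6_vee6_Pse3 (A : Matrix (Fin 3 ⊕ Fin 1) (Fin 3 ⊕ Fin 1) ℝ) :
    hat6 (vee6 (Pse3 A)) = Pse3 A := by
  ext (i | i) (j | j) <;> fin_cases i <;> fin_cases j <;>
    simp [hat6, skew3, Pse3, vee6] <;> ring

theorem hat6_zero : hat6 0 = 0 := by
  ext (i | i) (j | j) <;> fin_cases i <;> fin_cases j <;> simp [hat6, skew3]

theorem vee6_Pse3_ne_zero {A : Matrix (Fin 3 ⊕ Fin 1) (Fin 3 ⊕ Fin 1) ℝ} (hA : Pse3 A ≠ 0) :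
    vee6 (Pse3 A) ≠ 0 := fun h =>
  hA (by rw [← hat6_vee6_Pse3, h, hat6_zero])

theorem se3_kinematic_stabilization_general
    (C : ℝ → Matrix (Fin 3 ⊕ Fin 1) (Fin 3 ⊕ Fin 1) ℝ)
    (Ce : Matrix (Fin 3 ⊕ Fin 1) (Fin 3 ⊕ Fin 1) ℝ)
    (Kp : Matrix (Fin 6) (Fin 6) ℝ) (d : Fin 6 → ℝ)
    (hKp : Kp = Matrix.diagonal d) (hd : ∀ i, 0 < d i)
    (E : ℝ → Matrix (Fin 3 ⊕ Fin 1) (Fin 3 ⊕ Fin 1) ℝ)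
    (hE : ∀ t, E t = Ce⁻¹ * C t - 1)
    (ζe : ℝ → Fin 6 → ℝ)
    (hζe : ∀ t, ζe t =
      -(Kp *ᵥ vee6 (Pse3 ((Ce⁻¹).transpose * E t * (C t).transpose))))
    (hC : ∀ t i j, HasDerivAt (fun s => C s i j) ((hat6 (ζe t) * C t) i j) t) :
    ∀ t,
      HasDerivAt (fun s => (1 / 2 : ℝ) * ∑ i, ∑ j, (E s i j) ^ 2)
        (-(vee6 (Pse3 ((Ce⁻¹).transpose * E t * (C t).transpose)) ⬝ᵥ
          ((Matrix.diagonal ![2, 2, 2, 1, 1, 1] * Kp) *ᵥ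
            vee6 (Pse3 ((Ce⁻¹).transpose * E t * (C t).transpose))))) t ∧
      -(vee6 (Pse3 ((Ce⁻¹).transpose * E t * (C t).transpose)) ⬝ᵥ
          ((Matrix.diagonal ![2, 2, 2, 1, 1, 1] * Kp) *ᵥ
            vee6 (Pse3 ((Ce⁻¹).transpose * E t * (C t).transpose)))) ≤ 0 ∧
      (Pse3 ((Ce⁻¹).transpose * E t * (C t).transpose) ≠ 0 →
        -(vee6 (Pse3 ((Ce⁻¹).transpose * E t * (C t).transpose)) ⬝ᵥ
          ((Matrix.diagonal ![2, 2, 2, 1, 1, 1] * Kp) *ᵥ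
            vee6 (Pse3 ((Ce⁻¹).transpose * E t * (C t).transpose)))) < 0) := by
  intro t
  have hQ : (diagonal ![2, 2, 2, 1, 1, 1] * Kp).PosDef := by
    rw [hKp, diagonal_mul_diagonal, posDef_diagonal_iff]
    intro i
    fin_cases i <;> simp [hd]
  have hE' : ∀ i j, HasDerivAt (fun s => E s i j) ((Ce⁻¹ * hat6 (ζe t) * C t) i j) t := by
    simp only [hE, Matrix.mul_assoc]
    exact hasDerivAt_matrix_mul_sub_apply (hC t) _ _
  have hV := HasDerivAt.half_sum_sum_sq hE'
  rw [sum_sum_mul_mul_mul, sum_sum_mul_hat6, hζe t, neg_dotProduct, hKp,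
    diagonal_mulVec_dotProduct_diagonal_mulVec, ← hKp] at hV
  refine ⟨hV, neg_nonpos.2 ?_, fun hP => neg_neg_iff_pos.2 ?_⟩
  · simpa using hQ.posSemidef.dotProduct_mulVec_nonneg _
  · simpa using hQ.dotProduct_mulVec_pos (vee6_Pse3_ne_zero hP)

/-- the kinematic stabilization law
`ζ_e = −K_p vee(P((C_e⁻¹)ᵀ E Cᵀ))` makes `V = (1/2)‖E‖_F²` decrease:
`V̇ = −vee(...)ᵀ L K_p vee(...) ≤ 0`, with strict decrease when the projection
is nonzero. Here `L = diag(2,2,2,1,1,1)`. -/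
theorem se3_kinematic_stabilization
    (C : ℝ → Matrix (Fin 3 ⊕ Fin 1) (Fin 3 ⊕ Fin 1) ℝ)
    (Ce : Matrix (Fin 3 ⊕ Fin 1) (Fin 3 ⊕ Fin 1) ℝ)
    (Re : Matrix (Fin 3) (Fin 3) ℝ) (pe : Fin 3 → ℝ)
    (hCe : Ce = Matrix.fromBlocks Re (Matrix.of fun i _ => pe i) 0 1)
    (hRe : Re.transpose * Re = 1) (hdet : Re.det = 1)
    (Kp : Matrix (Fin 6) (Fin 6) ℝ) (d : Fin 6 → ℝ)
    (hKp : Kp = Matrix.diagonal d) (hd : ∀ i, 0 < d i)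
    (E : ℝ → Matrix (Fin 3 ⊕ Fin 1) (Fin 3 ⊕ Fin 1) ℝ)
    (hE : ∀ t, E t = Ce⁻¹ * C t - 1)
    (ζe : ℝ → Fin 6 → ℝ)
    (hζe : ∀ t, ζe t =
      -(Kp *ᵥ vee6 (Pse3 ((Ce⁻¹).transpose * E t * (C t).transpose))))
    (hC : ∀ t i j, HasDerivAt (fun s => C s i j) ((hat6 (ζe t) * C t) i j) t) :
    ∀ t,
      HasDerivAt (fun s => (1 / 2 : ℝ) * ∑ i, ∑ j, (E s i j) ^ 2)
        (-(vee6 (Pse3 ((Ce⁻¹).transpose * E t * (C t).transpose)) ⬝ᵥ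
          ((Matrix.diagonal ![2, 2, 2, 1, 1, 1] * Kp) *ᵥ
            vee6 (Pse3 ((Ce⁻¹).transpose * E t * (C t).transpose))))) t ∧
      -(vee6 (Pse3 ((Ce⁻¹).transpose * E t * (C t).transpose)) ⬝ᵥ
          ((Matrix.diagonal ![2, 2, 2, 1, 1, 1] * Kp) *ᵥ
            vee6 (Pse3 ((Ce⁻¹).transpose * E t * (C t).transpose)))) ≤ 0 ∧
      (Pse3 ((Ce⁻¹).transpose * E t * (C t).transpose) ≠ 0 →
        -(vee6 (Pse3 ((Ce⁻¹).transpose * E t * (C t).transpose)) ⬝ᵥ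
          ((Matrix.diagonal ![2, 2, 2, 1, 1, 1] * Kp) *ᵥ
            vee6 (Pse3 ((Ce⁻¹).transpose * E t * (C t).transpose)))) < 0) :=
  se3_kinematic_stabilization_general C Ce Kp d hKp hd E hE ζe hζe hC
end
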